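/- The second full quaternionic derivative of p⁻¹ equals 2p⁻³: with Φ₁⁽¹⁾ = (b·b̄ - ā²)/(a·ā + b·b̄)² and Φ₂⁽¹⁾ = b·(a + ā)/(a·ā + b·b̄)², one has (∂ₐΦ₁⁽¹⁾ + ∂_āΦ₁⁽¹⁾) + (∂ₐΦ₂⁽¹⁾ + ∂_āΦ₂⁽¹⁾)·j = 2·conj(p)³/|p|⁶ = 2p⁻³ for p ≠ 0. -/

import Mathlib

open Quaternion

noncomputable section

/-- Embedding of a complex number `x + y i` into the real quaternions. -/
def Cq (z : ℂ) : ℍ[ℝ] := ⟨z.re, z.im, 0, 0⟩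

/-- The quaternion unit `i`. -/
def qi : ℍ[ℝ] := ⟨0, 1, 0, 0⟩

/-- The quaternion unit `j`. -/
def qj : ℍ[ℝ] := ⟨0, 0, 1, 0⟩

/-- The quaternion unit `k`. -/
def qk : ℍ[ℝ] := ⟨0, 0, 0, 1⟩

/-!
In Cayley–Dickson coordinates `p = a + b j`, multiplication reads
`(x + y j)(u + v j) = (x u - y v̄) + (x v + y ū) j`, so
`2 p̄³ = 2 (ā³ - (a + 2ā) b b̄) - 2 b (a² + a ā + ā² - b b̄) j`.
Differentiating `Φ₁⁽¹⁾` and `Φ₂⁽¹⁾` formally in `a` and in `ā` and adding gives exactly these two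
numerators over `(a ā + b b̄)³ = |p|⁶`. The second identity is `p⁻¹ = p̄ / |p|²`.
-/

open ComplexConjugate

def cayleyDickson (x y : ℂ) : ℍ[ℝ] := Cq x + Cq y * qj

section Components

variable (x y : ℂ)

@[simp] theorem re_cayleyDickson : (cayleyDickson x y).re = x.re := by
  simp only [cayleyDickson, Quaternion.re_add, Quaternion.re_mul]
  simp [Cq, qj]

@[simp] theorem imI_cayleyDickson : (cayleyDickson x y).imI = x.im := by
  simp only [cayleyDickson, Quaternion.imI_add, Quaternion.imI_mul]
  simp [Cq, qj]

@[simp] theorem imJ_cayleyDickson : (cayleyDickson x y).imJ = y.re := by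
  simp only [cayleyDickson, Quaternion.imJ_add, Quaternion.imJ_mul]
  simp [Cq, qj]

@[simp] theorem imK_cayleyDickson : (cayleyDickson x y).imK = y.im := by
  simp only [cayleyDickson, Quaternion.imK_add, Quaternion.imK_mul]
  simp [Cq, qj]

end Components

theorem cayleyDickson_mul (x y u v : ℂ) :
    cayleyDickson x y * cayleyDickson u v
      = cayleyDickson (x * u - y * conj v) (x * v + y * conj u) := by
  ext <;>
    simp only [re_mul, imI_mul, imJ_mul, imK_mul, re_cayleyDickson, imI_cayleyDickson,
      imJ_cayleyDickson, imK_cayleyDickson, Complex.add_re, Complex.add_im, Complex.sub_re,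
      Complex.sub_im, Complex.mul_re, Complex.mul_im, Complex.conj_re, Complex.conj_im] <;>
    ring

theorem star_cayleyDickson (x y : ℂ) : star (cayleyDickson x y) = cayleyDickson (conj x) (-y) := by
  ext <;> simp

theorem smul_cayleyDickson (r : ℝ) (x y : ℂ) :
    r • cayleyDickson x y = cayleyDickson (r * x) (r * y) := by
  ext <;> simp

theorem normSq_cayleyDickson (x y : ℂ) :
    normSq (cayleyDickson x y) = Complex.normSq x + Complex.normSq y := by
  rw [normSq_def', Complex.normSq_apply, Complex.normSq_apply, re_cayleyDickson, imI_cayleyDickson,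
    imJ_cayleyDickson, imK_cayleyDickson]
  ring

theorem star_cayleyDickson_pow_three (x y : ℂ) :
    star (cayleyDickson x y) ^ 3 = cayleyDickson (conj x ^ 3 - (x + 2 * conj x) * y * conj y)
      (-y * (x ^ 2 + x * conj x + conj x ^ 2 - y * conj y)) := by
  rw [pow_three, star_cayleyDickson, cayleyDickson_mul, cayleyDickson_mul]
  congr 1 <;> simp only [map_neg, map_add, map_sub, map_mul, Complex.conj_conj] <;> ring

theorem Quaternion.div_coe {R : Type*} [Field R] [LinearOrder R] [IsStrictOrderedRing R]
    (q : ℍ[R]) (r : R) : q / r = r⁻¹ • q := by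
  rw [div_eq_mul_inv, ← coe_inv, mul_coe_eq_smul]

theorem Quaternion.inv_pow_eq_star_pow_div {R : Type*} [Field R] [LinearOrder R]
    [IsStrictOrderedRing R] (q : ℍ[R]) (n : ℕ) :
    q⁻¹ ^ n = star q ^ n / ((normSq q : R) : ℍ[R]) ^ n := by
  rw [inv_def, smul_pow, ← coe_pow, div_coe, inv_pow]

theorem HasDerivAt.div_sq {𝕜 : Type*} [NontriviallyNormedField 𝕜] {f g : 𝕜 → 𝕜} {f' g' x : 𝕜}
    (hf : HasDerivAt f f' x) (hg : HasDerivAt g g' x) (hx : g x ≠ 0) :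
    HasDerivAt (fun t => f t / g t ^ 2) ((f' * g x - 2 * f x * g') / g x ^ 3) x := by
  refine (hf.fun_div (hg.pow 2) (pow_ne_zero 2 hx)).congr_deriv ?_
  simp only [Pi.pow_apply]
  field_simp
  ring

section FullDeriv

variable {𝕜 : Type*} [NontriviallyNormedField 𝕜]

/- The paper's conjugate variables `ā, b̄` are the independent arguments `a', b'`. -/
def fullDeriv (F : 𝕜 → 𝕜 → 𝕜 → 𝕜 → 𝕜) (a a' b b' : 𝕜) : 𝕜 :=
  deriv (fun t => F t a' b b') a + deriv (fun t => F a t b b') a'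

def Φ₁ (a a' b b' : 𝕜) : 𝕜 := (b * b' - a' ^ 2) / (a * a' + b * b') ^ 2

def Φ₂ (a a' b b' : 𝕜) : 𝕜 := b * (a + a') / (a * a' + b * b') ^ 2

variable {a a' b b' : 𝕜}

theorem fullDeriv_Φ₁ (hD : a * a' + b * b' ≠ 0) :
    fullDeriv Φ₁ a a' b b' = 2 * (a' ^ 3 - (a + 2 * a') * b * b') / (a * a' + b * b') ^ 3 := by
  have h₁ : HasDerivAt (fun t => Φ₁ t a' b b') _ a :=
    (hasDerivAt_const a _).div_sq (((hasDerivAt_id' a).mul_const a').add_const (b * b')) hD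
  have h₂ : HasDerivAt (fun t => Φ₁ a t b b') _ a' :=
    ((hasDerivAt_pow 2 a').const_sub (b * b')).div_sq
      (((hasDerivAt_id' a').const_mul a).add_const (b * b')) hD
  rw [fullDeriv, h₁.deriv, h₂.deriv]
  field_simp
  ring

theorem fullDeriv_Φ₂ (hD : a * a' + b * b' ≠ 0) :
    fullDeriv Φ₂ a a' b b'
      = -2 * b * (a ^ 2 + a * a' + a' ^ 2 - b * b') / (a * a' + b * b') ^ 3 := by
  have h₁ : HasDerivAt (fun t => Φ₂ t a' b b') _ a :=
    ((hasDerivAt_id' a).add_const a' |>.const_mul b).div_sq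
      (((hasDerivAt_id' a).mul_const a').add_const (b * b')) hD
  have h₂ : HasDerivAt (fun t => Φ₂ a t b b') _ a' :=
    ((hasDerivAt_id' a').const_add a |>.const_mul b).div_sq
      (((hasDerivAt_id' a').const_mul a).add_const (b * b')) hD
  rw [fullDeriv, h₁.deriv, h₂.deriv]
  field_simp
  ring

end FullDeriv

/-- The second full quaternionic derivative of `p⁻¹` equals `2p⁻³`: with
`Φ₁⁽¹⁾ = (b·b̄ - ā²)/(a·ā + b·b̄)²` and `Φ₂⁽¹⁾ = b·(a + ā)/(a·ā + b·b̄)²`,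
one has `(∂ₐΦ₁⁽¹⁾ + ∂_āΦ₁⁽¹⁾) + (∂ₐΦ₂⁽¹⁾ + ∂_āΦ₂⁽¹⁾)·j = 2·conj(p)³/|p|⁶ = 2p⁻³`. -/
theorem second_full_derivative_p_inv (a b : ℂ) (p : ℍ[ℝ]) (hab : p = Cq a + Cq b * qj)
    (hp : p ≠ 0) :
    Cq (deriv (fun t : ℂ =>
            (b * (starRingEnd ℂ) b - ((starRingEnd ℂ) a) ^ 2)
              / (t * (starRingEnd ℂ) a + b * (starRingEnd ℂ) b) ^ 2) a
          + deriv (fun t : ℂ =>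
            (b * (starRingEnd ℂ) b - t ^ 2) / (a * t + b * (starRingEnd ℂ) b) ^ 2)
            ((starRingEnd ℂ) a))
      + Cq (deriv (fun t : ℂ =>
            b * (t + (starRingEnd ℂ) a) / (t * (starRingEnd ℂ) a + b * (starRingEnd ℂ) b) ^ 2) a
          + deriv (fun t : ℂ =>
            b * (a + t) / (a * t + b * (starRingEnd ℂ) b) ^ 2) ((starRingEnd ℂ) a)) * qj
      = 2 * (star p) ^ 3 / ((Quaternion.normSq p : ℝ) : ℍ[ℝ]) ^ 3 ∧
    2 * (star p) ^ 3 / ((Quaternion.normSq p : ℝ) : ℍ[ℝ]) ^ 3 = 2 * (p⁻¹) ^ 3 := by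
  obtain rfl : p = cayleyDickson a b := hab
  have hN : ((normSq (cayleyDickson a b) : ℝ) : ℂ) = a * conj a + b * conj b := by
    simp [normSq_cayleyDickson, Complex.mul_conj]
  have hD : a * conj a + b * conj b ≠ 0 := by
    rw [← hN]
    exact_mod_cast (normSq_eq_zero.not).2 hp
  refine ⟨?_, by rw [inv_pow_eq_star_pow_div, mul_div_assoc]⟩
  show cayleyDickson (fullDeriv Φ₁ a (conj a) b (conj b))
    (fullDeriv Φ₂ a (conj a) b (conj b)) = _
  rw [fullDeriv_Φ₁ hD, fullDeriv_Φ₂ hD, ← coe_pow, div_coe,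
    show (2 : ℍ[ℝ]) = ((2 : ℝ) : ℍ[ℝ]) by norm_cast, coe_mul_eq_smul, smul_smul,
    star_cayleyDickson_pow_three, smul_cayleyDickson]
  congr 1 <;> push_cast [hN] <;> field_simp
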